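/- For n ≥ 6, let B be the (n−3)×(n−3) matrix over K[x_1,…,x_n] with b_{jj} = x_1 for j = 1,…,n−4, b_{n−3,n−3} = x_3, b_{j+1,j} = x_2 for j = 1,…,n−4, b_{j−1,j} = x_3 x_{3+j} for j = 2,…,n−4, b_{1,n−3} = x_2, b_{i,n−3} = x_{2+i} for i = 2,…,n−4, and all other entries zero. Let D = det B − (−1)^n x_2^{n−3}. Then D belongs to the ideal I_n generated by the monomials x_1x_j (3 ≤ j ≤ n−1), x_2x_j (4 ≤ j ≤ n), x_3x_j (5 ≤ j ≤ n), and x_jx_n (4 ≤ j ≤ n−2). -/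

import Mathlib

open MvPolynomial

/-- The variable `x_k` (1-based indexing, `1 ≤ k ≤ n`) of `K[x_1,…,x_n]`. -/
noncomputable def xv (K : Type*) [Field K] (n : ℕ) (hn : 0 < n) (k : ℕ) :
    MvPolynomial (Fin n) K :=
  X ⟨(k - 1) % n, Nat.mod_lt _ hn⟩

/-- The `(n-3) × (n-3)` matrix `B`: diagonal entries `x₁` except the last one `x₃`,
subdiagonal entries `x₂`, superdiagonal entries `x₃x₅, …, x₃x_{n-1}` (except in the last
column), last column `(x₂, x₄, x₅, …, x_{n-2}, x₃)`, and zeros elsewhere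
(rows and columns are 0-based here). -/
noncomputable def Bmat (K : Type*) [Field K] (n : ℕ) (hn : 0 < n) :
    Matrix (Fin (n - 3)) (Fin (n - 3)) (MvPolynomial (Fin n) K) :=
  fun i j =>
    if (i : ℕ) = j ∧ (j : ℕ) = n - 4 then xv K n hn 3
    else if (i : ℕ) = j then xv K n hn 1
    else if (i : ℕ) = (j : ℕ) + 1 then xv K n hn 2
    else if (j : ℕ) = (i : ℕ) + 1 ∧ (j : ℕ) ≠ n - 4 then
      xv K n hn 3 * xv K n hn ((i : ℕ) + 5)
    else if (j : ℕ) = n - 4 ∧ (i : ℕ) = 0 then xv K n hn 2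
    else if (j : ℕ) = n - 4 ∧ 1 ≤ (i : ℕ) then xv K n hn ((i : ℕ) + 3)
    else 0

/-- `D = det B - (-1)ⁿ x₂^{n-3}`. -/
noncomputable def Dpoly (K : Type*) [Field K] (n : ℕ) (hn : 0 < n) :
    MvPolynomial (Fin n) K :=
  (Bmat K n hn).det - (-1 : MvPolynomial (Fin n) K) ^ n * (xv K n hn 2) ^ (n - 3)

/-- The generating set of the squarefree monomial ideal `I_n`:
`x₁x_j (3 ≤ j ≤ n-1)`, `x₂x_j (4 ≤ j ≤ n)`, `x₃x_j (5 ≤ j ≤ n)`, `x_jx_n (4 ≤ j ≤ n-2)`. -/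
def Igens (K : Type*) [Field K] (n : ℕ) (hn : 0 < n) : Set (MvPolynomial (Fin n) K) :=
  {p | ∃ j, 3 ≤ j ∧ j ≤ n - 1 ∧ p = xv K n hn 1 * xv K n hn j} ∪
  {p | ∃ j, 4 ≤ j ∧ j ≤ n ∧ p = xv K n hn 2 * xv K n hn j} ∪
  {p | ∃ j, 5 ≤ j ∧ j ≤ n ∧ p = xv K n hn 3 * xv K n hn j} ∪
  {p | ∃ j, 4 ≤ j ∧ j ≤ n - 2 ∧ p = xv K n hn j * xv K n hn n}

/-- The ideal `I_n ⊆ K[x_1,…,x_n]`. -/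
noncomputable def Iideal (K : Type*) [Field K] (n : ℕ) (hn : 0 < n) :
    Ideal (MvPolynomial (Fin n) K) :=
  Ideal.span (Igens K n hn)

/-- `q_i = ∑_{j=1}^{n-3} b_{ij} x_{3+j}` (with `j` the 1-based column index). -/
noncomputable def qpoly (K : Type*) [Field K] (n : ℕ) (hn : 0 < n) (i : Fin (n - 3)) :
    MvPolynomial (Fin n) K :=
  ∑ j : Fin (n - 3), Bmat K n hn i j * xv K n hn ((j : ℕ) + 4)

section Aux

variable {K : Type*} [Field K]

lemma mem_gen1 (n : ℕ) (hn : 6 ≤ n) (h : 0 < n) {s : ℕ} (h3 : 3 ≤ s) (hs : s ≤ n - 1) :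
    xv K n h 1 * xv K n h s ∈ Iideal K n h := by
  apply Ideal.subset_span
  unfold Igens
  exact Or.inl (Or.inl (Or.inl ⟨s, h3, hs, rfl⟩))

lemma mem_gen3 (n : ℕ) (hn : 6 ≤ n) (h : 0 < n) {s : ℕ} (h5 : 5 ≤ s) (hs : s ≤ n) :
    xv K n h 3 * xv K n h s ∈ Iideal K n h := by
  apply Ideal.subset_span
  unfold Igens
  exact Or.inl (Or.inr ⟨s, h5, hs, rfl⟩)

/-- Outside rows `j`, `j+1`, a non-last column of `B` has entries in `I`. -/
lemma entry_mem (n : ℕ) (hn : 6 ≤ n) (h : 0 < n) (i j : Fin (n - 3))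
    (hj : (j : ℕ) ≠ n - 4) (h1 : (i : ℕ) ≠ j) (h2 : (i : ℕ) ≠ (j : ℕ) + 1) :
    Bmat K n h i j ∈ Iideal K n h := by
  have hiLt := i.isLt
  have hjLt := j.isLt
  unfold Bmat
  split_ifs with c1 c2 c3 c4
  · omega
  · exact mem_gen3 n hn h (by omega) (by omega)
  · omega
  · omega
  · exact Ideal.zero_mem _

/-- `x₁` times any entry of the last column of `B`, except the top one, is in `I`. -/
lemma entry_last_mem (n : ℕ) (hn : 6 ≤ n) (h : 0 < n) (r l : Fin (n - 3))
    (hl : (l : ℕ) = n - 4) (hr : (r : ℕ) ≠ 0) :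
    xv K n h 1 * Bmat K n h r l ∈ Iideal K n h := by
  have hrLt := r.isLt
  unfold Bmat
  split_ifs with c1 c2 c3 c4 c5 c6
  · exact mem_gen1 n hn h (le_refl 3) (by omega)
  · omega
  · omega
  · omega
  · omega
  · exact mem_gen1 n hn h (by omega) (by omega)
  · omega

lemma entry_zero (n : ℕ) (hn : 6 ≤ n) (h : 0 < n) (z : Fin (n - 3))
    (hz : (z : ℕ) = 0) : Bmat K n h z z = xv K n h 1 := by
  unfold Bmat
  split_ifs with c1 c2
  · omega
  · rfl
  all_goals omega

lemma coe_rot (n : ℕ) (hn : 6 ≤ n) :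
    ∀ i : Fin (n - 3),
      ((finRotate (n - 3)) i : ℕ) = if (i : ℕ) = n - 4 then 0 else (i : ℕ) + 1 := by
  have hc : n - 3 = (n - 4) + 1 := by omega
  rw [hc]
  intro i
  rw [coe_finRotate]
  rcases eq_or_ne ((i : ℕ)) (n - 4) with hi | hi
  · rw [if_pos (Fin.ext (by simpa using hi)), if_pos hi]
  · rw [if_neg (by simpa [Fin.ext_iff] using hi), if_neg hi]

lemma prod_rot (n : ℕ) (hn : 6 ≤ n) (h : 0 < n) :
    ∏ i : Fin (n - 3), Bmat K n h ((finRotate (n - 3)) i) i = xv K n h 2 ^ (n - 3) := by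
  have key : ∀ i : Fin (n - 3), Bmat K n h ((finRotate (n - 3)) i) i = xv K n h 2 := by
    intro i
    have hv := coe_rot n hn i
    have hiLt := i.isLt
    rcases eq_or_ne ((i : ℕ)) (n - 4) with hi | hi
    · rw [if_pos hi] at hv
      unfold Bmat
      split_ifs with c1 c2 c3 c4 c5 c6 <;> first | rfl | omega
    · rw [if_neg hi] at hv
      unfold Bmat
      split_ifs with c1 c2 c3 <;> first | rfl | omega
  rw [Finset.prod_congr rfl (fun i _ => key i), Finset.prod_const, Finset.card_univ,
    Fintype.card_fin]

lemma sign_rot (n : ℕ) (hn : 6 ≤ n) :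
    Equiv.Perm.sign (finRotate (n - 3)) = (-1 : ℤˣ) ^ (n - 4) := by
  have hc : n - 3 = (n - 4) + 1 := by omega
  rw [hc]
  rw [sign_finRotate, Nat.add_sub_cancel]

end Aux

/-- For `n ≥ 6`, the polynomial `D = det B - (-1)ⁿ x₂^{n-3}` belongs to the ideal `I_n`. -/
theorem Dpoly_mem_Iideal {K : Type*} [Field K] (n : ℕ) (hn : 6 ≤ n) :
    Dpoly K n (by omega) ∈ Iideal K n (by omega) := by
  have h : 0 < n := by omega
  show Dpoly K n h ∈ Iideal K n h
  classical
  set σ₀ : Equiv.Perm (Fin (n - 3)) := finRotate (n - 3) with hσ₀def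
  have hterm : ∀ σ : Equiv.Perm (Fin (n - 3)), σ ≠ σ₀ →
      (∏ i, Bmat K n h (σ i) i) ∈ Iideal K n h := by
    intro σ hσ
    by_cases hgood : ∀ j : Fin (n - 3), (j : ℕ) ≠ n - 4 →
        (σ j : ℕ) = (j : ℕ) ∨ (σ j : ℕ) = (j : ℕ) + 1
    · -- structured case: σ picks diagonal/subdiagonal in every non-last column
      have hz3 : (0 : ℕ) < n - 3 := by omega
      have hl3 : n - 4 < n - 3 := by omega
      set z : Fin (n - 3) := ⟨0, hz3⟩ with hzdef
      set l : Fin (n - 3) := ⟨n - 4, hl3⟩ with hldef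
      have hzval : (z : ℕ) = 0 := rfl
      have hlval : (l : ℕ) = n - 4 := rfl
      have hzl : z ≠ l := by
        intro e
        have := congrArg Fin.val e
        rw [hzval, hlval] at this
        omega
      have hσz : (σ z : ℕ) = 0 := by
        rcases hgood z (by rw [hzval]; omega) with h0 | h1
        · rwa [hzval] at h0
        · -- σ z = 1 forces σ = σ₀
          exfalso; apply hσ
          rw [hzval] at h1
          have key : ∀ j : ℕ, j < n - 4 → ∀ i : Fin (n - 3), (i : ℕ) = j →
              (σ i : ℕ) = j + 1 := by
            intro j
            induction j with
            | zero =>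
              intro _ i hi
              have : i = z := Fin.ext (by rw [hi, hzval])
              rw [this, h1]
            | succ k ih =>
              intro hk i hi
              have hk' : k < n - 4 := by omega
              have hprev := ih hk' ⟨k, by omega⟩ rfl
              rcases hgood i (by omega) with he | he
              · exfalso
                have heq : σ i = σ ⟨k, by omega⟩ :=
                  Fin.ext (he.trans (hi.trans hprev.symm))
                have := congrArg Fin.val (σ.injective heq)
                simp only [Fin.val_mk] at this
                omega
              · rw [he, hi]
          have hσl : (σ l : ℕ) = 0 := by
            by_contra hne
            have hlt := (σ l).isLt
            have hk : (σ l : ℕ) - 1 < n - 4 := by omega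
            have hpf : (σ l : ℕ) - 1 < n - 3 := by omega
            have hkey := key ((σ l : ℕ) - 1) hk ⟨(σ l : ℕ) - 1, hpf⟩ rfl
            have heq : σ l = σ ⟨(σ l : ℕ) - 1, hpf⟩ := Fin.ext (by omega)
            have := congrArg Fin.val (σ.injective heq)
            simp only [Fin.val_mk] at this
            omega
          apply Equiv.ext
          intro i
          apply Fin.ext
          rw [hσ₀def, coe_rot n hn i]
          rcases eq_or_ne ((i : ℕ)) (n - 4) with hi | hi
          · have : i = l := Fin.ext (by rw [hi, hlval])
            rw [this, if_pos (by rw [hlval]), hσl]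
          · rw [if_neg hi]
            exact key (i : ℕ) (by have := i.isLt; omega) i rfl
      have hσlne : (σ l : ℕ) ≠ 0 := by
        intro e
        have heq : σ l = σ z := Fin.ext (by rw [e, hσz])
        exact hzl (σ.injective heq).symm
      have hmem_l : l ∈ Finset.univ.erase z :=
        Finset.mem_erase.mpr ⟨fun e => hzl e.symm, Finset.mem_univ _⟩
      rw [← Finset.mul_prod_erase Finset.univ _ (Finset.mem_univ z),
        ← Finset.mul_prod_erase _ _ hmem_l, ← mul_assoc]
      apply Ideal.mul_mem_right
      have hz1 : Bmat K n h (σ z) z = xv K n h 1 := by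
        have heq : σ z = z := Fin.ext (by rw [hσz, hzval])
        rw [heq]
        exact entry_zero n hn h z hzval
      rw [hz1]
      exact entry_last_mem n hn h (σ l) l hlval hσlne
    · push_neg at hgood
      obtain ⟨j, hj, hj1, hj2⟩ := hgood
      rw [← Finset.mul_prod_erase Finset.univ _ (Finset.mem_univ j)]
      exact Ideal.mul_mem_right _ _ (entry_mem n hn h (σ j) j hj hj1 hj2)
  have hprod : ∏ i, Bmat K n h (σ₀ i) i = xv K n h 2 ^ (n - 3) := prod_rot n hn h
  have hsgn : ((Equiv.Perm.sign σ₀ : ℤ) : MvPolynomial (Fin n) K) = (-1) ^ (n - 4) := by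
    rw [hσ₀def, sign_rot n hn]
    push_cast
    ring
  have hpow : ((-1 : MvPolynomial (Fin n) K)) ^ n = (-1) ^ (n - 4) := by
    have h4 : (-1 : MvPolynomial (Fin n) K) ^ (n - 4) * (-1) ^ 4 = (-1) ^ n := by
      rw [← pow_add]
      congr 1
      omega
    rw [← h4]
    norm_num
  unfold Dpoly
  rw [Matrix.det_apply', ← Finset.add_sum_erase _ _ (Finset.mem_univ σ₀), hprod, hsgn, hpow,
    add_sub_cancel_left]
  exact Ideal.sum_mem _ fun σ hσmem =>
    Ideal.mul_mem_left _ _ (hterm σ (Finset.ne_of_mem_erase hσmem))
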